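/- Let E and F be finite-dimensional real normed vector spaces, let L_T : E × F → ℝ be twice continuously differentiable near (λ', w'), suppose ∂L_T/∂w vanishes at (λ', w'), let H := D²_ww L_T(λ', w') : F → F and J := D²_wλ L_T(λ', w') : E → F, and additionally suppose ‖I − H‖ < 1 in operator norm (so that in particular H is invertible). If w* : U → F is a differentiable best-response map on a neighborhood U of λ' with w*(λ') = w' and ∂L_T/∂w(λ, w*(λ)) = 0 on U, then D w*(λ') = − (lim_{i→∞} ∑_{j=0}^{i} (I − H)^j) ∘ J, where the limit of the partial sums exists in operator norm and equals H⁻¹. -/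

import Mathlib

open Filter Topology

/-- Theorem 1 of the paper: the derivative of the best-response map is
`D wstar (lam') = -(lim_i ∑_{j=0}^{i} (I - H)^j) ∘ J`, where the limit of the partial
Neumann sums exists in operator norm and equals `H⁻¹`. -/
theorem stmt4
    {E : Type*} [NormedAddCommGroup E] [NormedSpace ℝ E] [FiniteDimensional ℝ E]
    {F : Type*} [NormedAddCommGroup F] [InnerProductSpace ℝ F] [FiniteDimensional ℝ F]
    (L : E × F → ℝ) (lam' : E) (w' : F)
    (hL : ContDiffAt ℝ 2 L (lam', w'))
    (hstat : fderiv ℝ (fun w => L (lam', w)) w' = 0)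
    (H : F →L[ℝ] F)
    (hH : H = fderiv ℝ (fun w => gradient (fun v => L (lam', v)) w) w')
    (J : E →L[ℝ] F)
    (hJ : J = fderiv ℝ (fun lam => gradient (fun v => L (lam, v)) w') lam')
    (hnorm : ‖(1 : F →L[ℝ] F) - H‖ < 1)
    (U : Set E) (hU : U ∈ 𝓝 lam')
    (wstar : E → F)
    (hwd : DifferentiableAt ℝ wstar lam')
    (hw0 : wstar lam' = w')
    (hbr : ∀ lam ∈ U, fderiv ℝ (fun w => L (lam, w)) (wstar lam) = 0) :
    IsUnit H ∧
      Tendsto (fun i : ℕ => ∑ j ∈ Finset.range (i + 1), ((1 : F →L[ℝ] F) - H) ^ j) atTop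
        (𝓝 (Ring.inverse H)) ∧
      fderiv ℝ wstar lam' = -((Ring.inverse H).comp J) := by
  -- Part 1: `H` is a unit, by the Neumann series.
  have hunit : IsUnit H := by
    have := isUnit_one_sub_of_norm_lt_one hnorm
    rwa [sub_sub_cancel] at this
  refine ⟨hunit, ?_, ?_⟩
  -- Part 2: the partial Neumann sums converge to `Ring.inverse H`.
  · have hs : HasSum (fun i : ℕ => ((1 : F →L[ℝ] F) - H) ^ i)
        (Ring.inverse (1 - ((1 : F →L[ℝ] F) - H))) :=
      hasSum_geom_series_inverse _ hnorm
    rw [sub_sub_cancel] at hs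
    have := hs.tendsto_sum_nat.comp (tendsto_add_atTop_nat 1)
    exact this
  -- Part 3: implicit differentiation.
  · set p : E × F := (lam', w') with hp
    -- the "gradient-in-w" map
    set A : E × F → F := fun q => gradient (fun v => L (q.1, v)) q.2 with hA
    -- a smooth version of it
    let c1 : ((E × F) →L[ℝ] ℝ) →L[ℝ] (F →L[ℝ] ℝ) :=
      (ContinuousLinearMap.compL ℝ F (E × F) ℝ).flip (ContinuousLinearMap.inr ℝ E F)
    let d : (F →L[ℝ] ℝ) →L[ℝ] F :=
      (InnerProductSpace.toDual ℝ F).symm.toContinuousLinearEquiv.toContinuousLinearMap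
    set T : ((E × F) →L[ℝ] ℝ) →L[ℝ] F := d.comp c1 with hT
    set Φ : E × F → F := fun q => T (fderiv ℝ L q) with hΦ
    -- `A` and `Φ` agree near `p`
    have hev : ∀ᶠ q in 𝓝 p, A q = Φ q := by
      filter_upwards [hL.eventually (by norm_num)] with q hq
      have hdL : DifferentiableAt ℝ L q := hq.differentiableAt (by norm_num)
      have hmk : HasFDerivAt (fun y : F => (q.1, y)) (ContinuousLinearMap.inr ℝ E F) q.2 :=
        hasFDerivAt_prodMk_right q.1 q.2
      have hLq : HasFDerivAt L (fderiv ℝ L q) (q.1, q.2) := by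
        simpa using hdL.hasFDerivAt
      have hcomp : HasFDerivAt (fun v : F => L (q.1, v))
          ((fderiv ℝ L q).comp (ContinuousLinearMap.inr ℝ E F)) q.2 := hLq.comp q.2 hmk
      show gradient (fun v => L (q.1, v)) q.2 = T (fderiv ℝ L q)
      have : T (fderiv ℝ L q) = (InnerProductSpace.toDual ℝ F).symm
          ((fderiv ℝ L q).comp (ContinuousLinearMap.inr ℝ E F)) := rfl
      rw [this, gradient, hcomp.fderiv]
    -- `Φ` is differentiable at `p`
    have hΦdiff : DifferentiableAt ℝ Φ p := by
      have h1 : ContDiffAt ℝ 1 (fderiv ℝ L) p := hL.fderiv_right (by norm_num)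
      exact (T.contDiff.contDiffAt.comp p h1).differentiableAt one_ne_zero
    have hAdiff : DifferentiableAt ℝ A p := hΦdiff.congr_of_eventuallyEq hev
    set DΦ : (E × F) →L[ℝ] F := fderiv ℝ A p with hDΦ
    have hDΦeq : DΦ = fderiv ℝ Φ p := Filter.EventuallyEq.fderiv_eq hev
    have hAΦ : HasFDerivAt A DΦ p := hAdiff.hasFDerivAt
    -- H is the partial derivative of A in w
    have hHe : H = DΦ.comp (ContinuousLinearMap.inr ℝ E F) := by
      have hmk : HasFDerivAt (fun y : F => (lam', y)) (ContinuousLinearMap.inr ℝ E F) w' :=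
        hasFDerivAt_prodMk_right lam' w'
      have hcomp : HasFDerivAt (fun w => A (lam', w))
          (DΦ.comp (ContinuousLinearMap.inr ℝ E F)) w' := hAΦ.comp w' hmk
      rw [hH]
      exact hcomp.fderiv
    -- J is the partial derivative of A in lam
    have hJe : J = DΦ.comp (ContinuousLinearMap.inl ℝ E F) := by
      have hmk : HasFDerivAt (fun x : E => (x, w')) (ContinuousLinearMap.inl ℝ E F) lam' :=
        hasFDerivAt_prodMk_left lam' w'
      have hcomp : HasFDerivAt (fun lam => A (lam, w'))
          (DΦ.comp (ContinuousLinearMap.inl ℝ E F)) lam' := hAΦ.comp (g := A) lam' hmk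
      rw [hJ]
      exact hcomp.fderiv
    -- the composite G lam = A (lam, wstar lam) vanishes on U
    set Dw : E →L[ℝ] F := fderiv ℝ wstar lam' with hDw
    have hmk2 : HasFDerivAt (fun lam => (lam, wstar lam))
        ((ContinuousLinearMap.id ℝ E).prod Dw) lam' :=
      HasFDerivAt.prodMk (hasFDerivAt_id lam') hwd.hasFDerivAt
    have hAΦ' : HasFDerivAt A DΦ (lam', wstar lam') := by rw [hw0]; exact hAΦ
    have hG : HasFDerivAt (fun lam => A (lam, wstar lam))
        (DΦ.comp ((ContinuousLinearMap.id ℝ E).prod Dw)) lam' := hAΦ'.comp (g := A) lam' hmk2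
    have hG0 : (fun lam => A (lam, wstar lam)) =ᶠ[𝓝 lam'] fun _ => (0 : F) := by
      filter_upwards [hU] with lam hlam
      show gradient (fun v => L (lam, v)) (wstar lam) = 0
      rw [gradient, hbr lam hlam, map_zero]
    have hGz : DΦ.comp ((ContinuousLinearMap.id ℝ E).prod Dw) = 0 := by
      have h1 : fderiv ℝ (fun lam => A (lam, wstar lam)) lam' =
          fderiv ℝ (fun _ : E => (0 : F)) lam' := hG0.fderiv_eq
      rw [hG.fderiv, fderiv_fun_const] at h1
      simpa using h1
    -- conclude
    have key : ∀ e : E, H (Dw e) = -(J e) := by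
      intro e
      have h0 : DΦ (e, Dw e) = 0 := by
        have := congrArg (fun (f : E →L[ℝ] F) => f e) hGz
        simpa using this
      have hsplit : (e, Dw e) = ((e, 0) : E × F) + (0, Dw e) := by simp
      have : DΦ (e, 0) + DΦ (0, Dw e) = 0 := by
        rw [← map_add, ← hsplit, h0]
      have hJe' : DΦ (e, 0) = J e := by rw [hJe]; rfl
      have hHe' : DΦ (0, Dw e) = H (Dw e) := by rw [hHe]; rfl
      rw [hJe', hHe'] at this
      rw [add_comm] at this
      exact eq_neg_of_add_eq_zero_left this
    show Dw = -((Ring.inverse H).comp J)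
    ext e
    have hinv : Ring.inverse H (H (Dw e)) = Dw e := by
      have := congrArg (fun f : F →L[ℝ] F => f (Dw e)) (Ring.inverse_mul_cancel H hunit)
      simpa [ContinuousLinearMap.mul_apply] using this
    calc Dw e = Ring.inverse H (H (Dw e)) := hinv.symm
      _ = Ring.inverse H (-(J e)) := by rw [key e]
      _ = (-((Ring.inverse H).comp J)) e := by simp
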